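/- Let α be a finite type with N elements, let k and n be integers with 1 ≤ k ≤ n ≤ N, set t = ⌊n/k⌋, and fix a size-n subset C of α. Sample I₁, …, I_t independently and uniformly from the size-k subsets of Fin N, and then sample g uniformly from the set of injective functions from ⋃_{j=1}^t I_j to C. Then for each index i ∈ {1, …, t}, the image g '' I_i is uniformly distributed on the size-k subsets of C; consequently, E[ f(g '' I_i) ] = Q_k(C, f) for every function f : Finset α → ℝ. -/
import Mathlib


open scoped ENNReal

lemma aux_map_uniform {D α : Type*} [Fintype D] [DecidableEq D] [Fintype α] [DecidableEq α]
    (k : ℕ) (C : Finset α) (J : Finset D) (hJ : J.card = k)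
    [hG : Nonempty {g : D → α // Function.Injective g ∧ ∀ x, g x ∈ C}]
    (hne : (C.powersetCard k).Nonempty) :
    (PMF.uniformOfFintype {g : D → α // Function.Injective g ∧ ∀ x, g x ∈ C}).map
      (fun g => J.image g.1) = PMF.uniformOfFinset (C.powersetCard k) hne := by
  classical
  set P := C.powersetCard k with hPdef
  have hout : ∀ g : {g₀ : D → α // Function.Injective g₀ ∧ ∀ x, g₀ x ∈ C}, J.image g.1 ∈ P := by
    intro g
    refine Finset.mem_powersetCard.mpr ⟨?_, ?_⟩
    · intro x hx
      obtain ⟨y, -, rfl⟩ := Finset.mem_image.mp hx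
      exact g.2.2 y
    · rw [Finset.card_image_of_injective _ g.2.1, hJ]
  have key : ∀ S ∈ P, ∀ S' ∈ P,
      (Finset.univ.filter fun g : {g₀ : D → α // Function.Injective g₀ ∧ ∀ x, g₀ x ∈ C} => J.image g.1 = S).card =
      (Finset.univ.filter fun g : {g₀ : D → α // Function.Injective g₀ ∧ ∀ x, g₀ x ∈ C} => J.image g.1 = S').card := by
    intro S hS S' hS'
    obtain ⟨hSC, hSk⟩ := Finset.mem_powersetCard.mp hS
    obtain ⟨hS'C, hS'k⟩ := Finset.mem_powersetCard.mp hS'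
    have c1 : Fintype.card {x : ↥C // x.1 ∈ S} = k := by
      rw [Fintype.card_congr (Equiv.subtypeSubtypeEquivSubtype (fun {x} hx => hSC hx))]
      rw [Fintype.card_coe]; exact hSk
    have c2 : Fintype.card {x : ↥C // x.1 ∈ S'} = k := by
      rw [Fintype.card_congr (Equiv.subtypeSubtypeEquivSubtype (fun {x} hx => hS'C hx))]
      rw [Fintype.card_coe]; exact hS'k
    let e : {x : ↥C // x.1 ∈ S} ≃ {x : ↥C // x.1 ∈ S'} :=
      Fintype.equivOfCardEq (c1.trans c2.symm)
    let σ : Equiv.Perm ↥C := e.extendSubtype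
    let π : Equiv.Perm α := σ.subtypeCongr (Equiv.refl _)
    have hπC : ∀ x ∈ C, π x ∈ C := by
      intro x hx
      rw [show π x = σ ⟨x, hx⟩ from Equiv.Perm.subtypeCongr.left_apply σ _ hx]
      exact (σ ⟨x, hx⟩).2
    have hfix : ∀ x, x ∉ C → π x = x := by
      intro x hx
      exact Equiv.Perm.subtypeCongr.right_apply σ _ hx
    have hπsymC : ∀ x ∈ C, π.symm x ∈ C := by
      intro x hx
      by_contra h
      have := hfix _ h
      rw [Equiv.apply_symm_apply] at this
      rw [← this] at h
      exact h hx
    have hπS : ∀ x ∈ S, π x ∈ S' := by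
      intro x hx
      have hxC : x ∈ C := hSC hx
      rw [show π x = σ ⟨x, hxC⟩ from Equiv.Perm.subtypeCongr.left_apply σ _ hxC]
      exact e.extendSubtype_mem ⟨x, hxC⟩ hx
    have himg : S.image π = S' := by
      apply Finset.eq_of_subset_of_card_le
      · intro y hy
        obtain ⟨x, hx, rfl⟩ := Finset.mem_image.mp hy
        exact hπS x hx
      · rw [Finset.card_image_of_injective _ π.injective, hSk, hS'k]
    have himg' : S'.image π.symm = S := by
      rw [← himg, Finset.image_image]
      simp
    refine Finset.card_bij' (fun g _ => ⟨π ∘ g.1, π.injective.comp g.2.1,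
        fun x => hπC _ (g.2.2 x)⟩)
      (fun g _ => ⟨π.symm ∘ g.1, π.symm.injective.comp g.2.1,
        fun x => hπsymC _ (g.2.2 x)⟩) ?_ ?_ ?_ ?_
    · intro g hg
      simp only [Finset.mem_filter, Finset.mem_univ, true_and] at hg ⊢
      rw [← Finset.image_image, hg, himg]
    · intro g hg
      simp only [Finset.mem_filter, Finset.mem_univ, true_and] at hg ⊢
      rw [← Finset.image_image, hg, himg']
    · intro g _; ext x; simp
    · intro g _; ext x; simp
  -- partition
  have hpart : Fintype.card {g₀ : D → α // Function.Injective g₀ ∧ ∀ x, g₀ x ∈ C} = ∑ S ∈ P, (Finset.univ.filter fun g : {g₀ : D → α // Function.Injective g₀ ∧ ∀ x, g₀ x ∈ C} => J.image g.1 = S).card := by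
    rw [← Finset.card_univ]
    exact Finset.card_eq_sum_card_fiberwise fun g _ => hout g
  obtain ⟨S₀, hS₀⟩ := hne
  set m := (Finset.univ.filter fun g : {g₀ : D → α // Function.Injective g₀ ∧ ∀ x, g₀ x ∈ C} => J.image g.1 = S₀).card with hm
  have hfib : ∀ S ∈ P, (Finset.univ.filter fun g : {g₀ : D → α // Function.Injective g₀ ∧ ∀ x, g₀ x ∈ C} => J.image g.1 = S).card = m :=
    fun S hS => key S hS S₀ hS₀
  have hcardG : Fintype.card {g₀ : D → α // Function.Injective g₀ ∧ ∀ x, g₀ x ∈ C} = P.card * m := by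
    rw [hpart, Finset.sum_congr rfl hfib, Finset.sum_const, smul_eq_mul]
  have hm0 : m ≠ 0 := by
    intro h
    have := Fintype.card_pos (α := {g₀ : D → α // Function.Injective g₀ ∧ ∀ x, g₀ x ∈ C})
    rw [hcardG, h, mul_zero] at this
    exact absurd this (lt_irrefl 0)
  ext b
  rw [PMF.map_apply, tsum_fintype]
  have hsum : ∑ a : {g₀ : D → α // Function.Injective g₀ ∧ ∀ x, g₀ x ∈ C}, (@ite ℝ≥0∞ (b = J.image a.1) (Classical.propDecidable _)
        (PMF.uniformOfFintype {g₀ : D → α // Function.Injective g₀ ∧ ∀ x, g₀ x ∈ C} a) 0) =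
      ((Finset.univ.filter fun a : {g₀ : D → α // Function.Injective g₀ ∧ ∀ x, g₀ x ∈ C} => J.image a.1 = b).card : ℝ≥0∞) *
        (Fintype.card {g₀ : D → α // Function.Injective g₀ ∧ ∀ x, g₀ x ∈ C} : ℝ≥0∞)⁻¹ := by
    simp only [PMF.uniformOfFintype_apply]
    rw [← Finset.sum_filter, Finset.sum_const, nsmul_eq_mul]
    congr 3
    ext a
    simp [eq_comm]
  refine hsum.trans ?_
  by_cases hb : b ∈ P
  · rw [hfib b hb, PMF.uniformOfFinset_apply, if_pos hb, hcardG]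
    push_cast
    rw [ENNReal.mul_inv (Or.inl (by exact_mod_cast Finset.card_ne_zero_of_mem hS₀))
      (Or.inl (ENNReal.natCast_ne_top _))]
    rw [mul_comm ((P.card : ℝ≥0∞))⁻¹ _, ← mul_assoc,
      ENNReal.mul_inv_cancel (by exact_mod_cast hm0) (ENNReal.natCast_ne_top _), one_mul]
  · rw [PMF.uniformOfFinset_apply, if_neg hb]
    have : (Finset.univ.filter fun a : {g₀ : D → α // Function.Injective g₀ ∧ ∀ x, g₀ x ∈ C} => J.image a.1 = b) = ∅ := by
      apply Finset.filter_false_of_mem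
      intro a _
      intro h
      exact hb (h ▸ hout a)
    rw [this]
    simp

/-- The average of `f` over all size-`k` subsets of `C`: the probability `Q_{Υ,k}(f)` that a
uniformly random size-`k` fragment of the relational example with domain `C` satisfies `f`. -/
noncomputable def Qk {α : Type*} [DecidableEq α] (k : ℕ) (C : Finset α) (f : Finset α → ℝ) : ℝ :=
  ((C.card.choose k : ℝ))⁻¹ * ∑ S ∈ C.powersetCard k, f S

/-- For a fixed size-`n` subset `C` of `α`: sample size-`k` subsets `I₁, …, I_t` of
`Fin (card α)` uniformly and independently, then sample an injective function `g` from `⋃ⱼ Iⱼ`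
to `C` uniformly, and output the image `g '' I_i` for a fixed index `i`. -/
noncomputable def sampleFragment (α : Type*) [Fintype α] [DecidableEq α] (k n t : ℕ)
    (hkn : k ≤ n) (hn : n ≤ Fintype.card α) (ht : t * k ≤ n)
    (C : Finset α) (hC : C.card = n) (i : Fin t) : PMF (Finset α) :=
  haveI hI : Nonempty {I : Finset (Fin (Fintype.card α)) // I.card = k} := by
    obtain ⟨s, -, hs⟩ := Finset.exists_subset_card_eq
      (show k ≤ (Finset.univ : Finset (Fin (Fintype.card α))).card by
        simpa using (hkn.trans hn))
    exact ⟨⟨s, hs⟩⟩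
  (PMF.uniformOfFintype (Fin t → {I : Finset (Fin (Fintype.card α)) // I.card = k})).bind
    fun I =>
      haveI : Nonempty {g : ↥(Finset.univ.biUnion fun j => (I j).1) → α //
          Function.Injective g ∧ ∀ x, g x ∈ C} := by
        have hU : (Finset.univ.biUnion fun j => (I j).1).card ≤ n := by
          refine le_trans Finset.card_biUnion_le ?_
          calc ∑ j : Fin t, (I j).1.card = ∑ _j : Fin t, k :=
                Finset.sum_congr rfl fun j _ => (I j).2
            _ = t * k := by simp [Finset.sum_const, mul_comm]
            _ ≤ n := ht
        have hcard :
            Fintype.card ↥(Finset.univ.biUnion fun j => (I j).1) ≤ Fintype.card ↥C := by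
          rw [Fintype.card_coe, Fintype.card_coe]
          exact hU.trans_eq hC.symm
        obtain ⟨e⟩ := Function.Embedding.nonempty_of_card_le hcard
        exact ⟨⟨fun x => (e x).1, fun a b hab => e.injective (Subtype.ext hab),
          fun x => (e x).2⟩⟩
      (PMF.uniformOfFintype
          {g : ↥(Finset.univ.biUnion fun j => (I j).1) → α //
            Function.Injective g ∧ ∀ x, g x ∈ C}).map fun g =>
        (I i).1.attach.image fun x =>
          g.1 ⟨x.1, Finset.mem_biUnion.mpr ⟨i, Finset.mem_univ i, x.2⟩⟩

/-- Step in the proof of Lemma 1 of the paper: for each index `i`, the image `g '' I_i` produced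
by the above process is uniformly distributed on the size-`k` subsets of `C`; consequently
`E[f(g '' I_i)] = Q_k(C, f)` for every `f : Finset α → ℝ`. -/
theorem stmt6 {α : Type*} [Fintype α] [DecidableEq α] (N k n : ℕ)
    (hN : Fintype.card α = N) (hk : 1 ≤ k) (hkn : k ≤ n) (hn : n ≤ Fintype.card α)
    (C : Finset α) (hC : C.card = n) (i : Fin (n / k))
    (hne : (C.powersetCard k).Nonempty) :
    sampleFragment α k n (n / k) hkn hn (Nat.div_mul_le_self n k) C hC i =
        PMF.uniformOfFinset (C.powersetCard k) hne ∧
      ∀ f : Finset α → ℝ,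
        ∑' S : Finset α,
            ((sampleFragment α k n (n / k) hkn hn (Nat.div_mul_le_self n k) C hC i) S).toReal
              * f S =
          Qk k C f := by
  haveI hI : Nonempty {I : Finset (Fin (Fintype.card α)) // I.card = k} := by
    obtain ⟨s, -, hs⟩ := Finset.exists_subset_card_eq
      (show k ≤ (Finset.univ : Finset (Fin (Fintype.card α))).card by
        simpa using (hkn.trans hn))
    exact ⟨⟨s, hs⟩⟩
  have hGne : ∀ I : Fin (n / k) → {I : Finset (Fin (Fintype.card α)) // I.card = k},
      Nonempty {g : ↥(Finset.univ.biUnion fun j => (I j).1) → α //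
        Function.Injective g ∧ ∀ x, g x ∈ C} := by
    intro I
    have hU : (Finset.univ.biUnion fun j => (I j).1).card ≤ n := by
      refine le_trans Finset.card_biUnion_le ?_
      calc ∑ j : Fin (n / k), (I j).1.card = ∑ _j : Fin (n / k), k :=
            Finset.sum_congr rfl fun j _ => (I j).2
        _ = (n / k) * k := by simp [Finset.sum_const, mul_comm]
        _ ≤ n := Nat.div_mul_le_self n k
    have hcard : Fintype.card ↥(Finset.univ.biUnion fun j => (I j).1) ≤ Fintype.card ↥C := by
      rw [Fintype.card_coe, Fintype.card_coe]
      exact hU.trans_eq hC.symm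
    obtain ⟨e⟩ := Function.Embedding.nonempty_of_card_le hcard
    exact ⟨⟨fun x => (e x).1, fun a b hab => e.injective (Subtype.ext hab),
      fun x => (e x).2⟩⟩
  have hconst : ∀ I : Fin (n / k) → {I : Finset (Fin (Fintype.card α)) // I.card = k},
      (haveI := hGne I
       (PMF.uniformOfFintype
          {g : ↥(Finset.univ.biUnion fun j => (I j).1) → α //
            Function.Injective g ∧ ∀ x, g x ∈ C}).map fun g =>
          (I i).1.attach.image fun x =>
            g.1 ⟨x.1, Finset.mem_biUnion.mpr ⟨i, Finset.mem_univ i, x.2⟩⟩)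
      = PMF.uniformOfFinset (C.powersetCard k) hne := by
    intro I
    haveI := hGne I
    set J : Finset ↥(Finset.univ.biUnion fun j => (I j).1) :=
      (I i).1.attach.image
        (fun x => ⟨x.1, Finset.mem_biUnion.mpr ⟨i, Finset.mem_univ i, x.2⟩⟩) with hJdef
    have hJ : J.card = k := by
      have hinj : Function.Injective (fun x : ↥(I i).1 =>
          (⟨x.1, Finset.mem_biUnion.mpr ⟨i, Finset.mem_univ i, x.2⟩⟩ :
            ↥(Finset.univ.biUnion fun j => (I j).1))) :=
        by intro a b hab; simp only [Subtype.mk.injEq] at hab; exact Subtype.ext hab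
      rw [hJdef, Finset.card_image_of_injective _ hinj, Finset.card_attach]
      exact (I i).2
    have hfun : (fun g : {g : ↥(Finset.univ.biUnion fun j => (I j).1) → α //
          Function.Injective g ∧ ∀ x, g x ∈ C} =>
        (I i).1.attach.image fun x =>
          g.1 ⟨x.1, Finset.mem_biUnion.mpr ⟨i, Finset.mem_univ i, x.2⟩⟩)
        = fun g => J.image g.1 := by
      funext g
      rw [hJdef, Finset.image_image]
      rfl
    refine Eq.trans ?_ (aux_map_uniform k C J hJ hne)
    exact congrArg (fun F => PMF.map F (PMF.uniformOfFintype _)) hfun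
  have h1 : sampleFragment α k n (n / k) hkn hn (Nat.div_mul_le_self n k) C hC i
      = PMF.uniformOfFinset (C.powersetCard k) hne := by
    rw [sampleFragment]
    exact (congrArg (PMF.bind (PMF.uniformOfFintype _)) (funext hconst)).trans
      (PMF.bind_const _ _)
  refine ⟨h1, fun f => ?_⟩
  have hzero : ∀ S ∉ C.powersetCard k,
      ((PMF.uniformOfFinset (C.powersetCard k) hne) S).toReal * f S = 0 := by
    intro S hS
    rw [PMF.uniformOfFinset_apply_of_notMem hne hS]
    simp
  calc ∑' S : Finset α,
        ((sampleFragment α k n (n / k) hkn hn (Nat.div_mul_le_self n k) C hC i) S).toReal * f S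
      = ∑' S : Finset α, ((PMF.uniformOfFinset (C.powersetCard k) hne) S).toReal * f S := by
        rw [h1]
    _ = ∑ S ∈ C.powersetCard k,
          ((PMF.uniformOfFinset (C.powersetCard k) hne) S).toReal * f S := tsum_eq_sum hzero
    _ = ∑ S ∈ C.powersetCard k, (((C.powersetCard k).card : ℝ))⁻¹ * f S :=
        Finset.sum_congr rfl fun S hS => by
          rw [PMF.uniformOfFinset_apply_of_mem hne hS]
          simp
    _ = Qk k C f := by
        rw [← Finset.mul_sum, Qk, Finset.card_powersetCard]
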